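/- The second-case condition of the relaxed singular-vector theorem—j = −(1+m+n)/2 and k+2 = (−m+n+r)/s with n a negative integer and m a nonnegative integer—implies that Λ(r,s,j,k) simultaneously satisfies both Verma-point equations: Λ(r,s,j,k) = n'(n'+1) + 2n'j for some integer n' ≤ −1 and Λ(r,s,j,k) = m'(m'−1) + 2(m'−1)j for some integer m' ≥ 1, i.e. the extremal diagram of the submodule contains both types of Verma points. -/
import Mathlib


/- STATEMENT 19: if j = −(1+m+n)/2 and k+2 = (−m+n+r)/s with n a negative
integer and m a nonnegative integer, then Λ(r,s,j,k) satisfies both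
Verma-point equations: Λ = n'(n'+1)+2n'j for some integer n' ≤ −1 and
Λ = m'(m'−1)+2(m'−1)j for some integer m' ≥ 1. -/

noncomputable def Lam (r s j k : ℝ) : ℝ :=
  (1 / 4) * (-1 - 2 * j - r + 2 * s + k * s) * (1 + 2 * j - r + 2 * s + k * s)

theorem relaxed_two_singular_vectors_case (r s n m : ℤ) (j k : ℝ)
    (hr : 1 ≤ r) (hs : 1 ≤ s) (hn : n < 0) (hm : 0 ≤ m)
    (hj : j = -(1 + (m : ℝ) + (n : ℝ)) / 2)
    (hk : k + 2 = ((-m + n + r : ℤ) : ℝ) / (s : ℝ)) :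
    (∃ n' : ℤ, n' ≤ -1 ∧
      Lam r s j k = (n' : ℝ) * ((n' : ℝ) + 1) + 2 * (n' : ℝ) * j) ∧
    (∃ m' : ℤ, 1 ≤ m' ∧
      Lam r s j k = (m' : ℝ) * ((m' : ℝ) - 1) + 2 * ((m' : ℝ) - 1) * j) := by
  have hs0 : (s : ℝ) ≠ 0 := by
    have : (0 : ℝ) < (s : ℝ) := by exact_mod_cast lt_of_lt_of_le one_pos hs
    linarith
  have hks : k * (s : ℝ) = (-(m : ℝ) + (n : ℝ) + (r : ℝ)) - 2 * (s : ℝ) := by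
    push_cast at hk
    field_simp at hk
    linarith
  have hLam : Lam r s j k = -(n : ℝ) * (m : ℝ) := by
    simp only [Lam, hj]
    rw [hks]; ring
  constructor
  · exact ⟨n, by omega, by rw [hLam, hj]; push_cast; ring⟩
  · exact ⟨m + 1, by omega, by rw [hLam, hj]; push_cast; ring⟩
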